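/- arXiv:0707.3039 — 4 statements merged into one kernel-verified Lean document; each statement's English description precedes it below -/
import Mathlib

section
/- Let H be a densely defined closed linear operator on a complex Hilbert space 𝓗 and let J : 𝓗 → 𝓗 be a conjugation operator, i.e. an antilinear map satisfying ⟨Jφ, Jψ⟩ = ⟨ψ, φ⟩ and J∘J = id. If H* = J H J (J-self-adjointness), then the residual spectrum of H is empty; that is, for every λ ∈ ℂ, if H − λ is injective then the range of H − λ is dense in 𝓗. -/
/-!
A vector `ψ` orthogonal to the range of `H - λ` lies in the domain of `H*` with `H* ψ = λ̄ ψ`.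
Since `H* = J H J` and `J` is antilinear, this says `H (J ψ) = λ (J ψ)`, so injectivity of
`H - λ` forces `J ψ = 0`, hence `ψ = 0`.
-/

open scoped InnerProductSpace

theorem LinearMap.dense_range_of_forall_inner_eq_zero {𝕜 X E : Type*} [RCLike 𝕜]
    [AddCommGroup X] [Module 𝕜 X] [NormedAddCommGroup E] [InnerProductSpace 𝕜 E]
    [CompleteSpace E] (f : X →ₗ[𝕜] E) (h : ∀ ψ, (∀ x, ⟪f x, ψ⟫_𝕜 = 0) → ψ = 0) :
    Dense (Set.range f) := by
  rw [← LinearMap.coe_range, Submodule.dense_iff_topologicalClosure_eq_top,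
    Submodule.topologicalClosure_eq_top_iff, Submodule.eq_bot_iff]
  intro ψ hψ
  exact h ψ fun x => hψ (f x) (LinearMap.mem_range_self f x)

namespace LinearPMap

variable {𝕜 E : Type*} [RCLike 𝕜] [NormedAddCommGroup E] [InnerProductSpace 𝕜 E]
  {T : E →ₗ.[𝕜] E} {lam : 𝕜} {ψ : E}

theorem inner_conj_smul_eq_inner_apply_of_orthogonal
    (hψ : ∀ x : T.domain, ⟪T x - lam • (x : E), ψ⟫_𝕜 = 0) (x : T.domain) :
    ⟪(starRingEnd 𝕜 lam) • ψ, (x : E)⟫_𝕜 = ⟪ψ, T x⟫_𝕜 := by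
  have h : ⟪ψ, T x - lam • (x : E)⟫_𝕜 = 0 := inner_eq_zero_symm.mp (hψ x)
  rw [inner_sub_right, sub_eq_zero] at h
  rw [h, inner_smul_right, inner_smul_left, RCLike.conj_conj]

variable [CompleteSpace E]

theorem mem_adjoint_domain_of_orthogonal
    (hψ : ∀ x : T.domain, ⟪T x - lam • (x : E), ψ⟫_𝕜 = 0) : ψ ∈ T†.domain :=
  T.mem_adjoint_domain_of_exists ψ
    ⟨_, inner_conj_smul_eq_inner_apply_of_orthogonal hψ⟩

theorem adjoint_apply_of_orthogonal (hT : Dense (T.domain : Set E))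
    (hψ : ∀ x : T.domain, ⟪T x - lam • (x : E), ψ⟫_𝕜 = 0) :
    T† ⟨ψ, mem_adjoint_domain_of_orthogonal hψ⟩ = (starRingEnd 𝕜 lam) • ψ :=
  adjoint_apply_eq hT _ (inner_conj_smul_eq_inner_apply_of_orthogonal hψ)

end LinearPMap

theorem stmt0_general {E : Type*} [NormedAddCommGroup E] [InnerProductSpace ℂ E]
    [CompleteSpace E]
    (T : E →ₗ.[ℂ] E) (hdense : Dense (T.domain : Set E))
    (J : E → E)
    (hJsmul : ∀ (a : ℂ) (x : E), J (a • x) = (starRingEnd ℂ a) • J x)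
    (hJinv : ∀ x, J (J x) = x)
    -- `H* = J H J` : the adjoint has domain `J⁻¹(dom H)` and acts as `J ∘ H ∘ J`
    (hdom : ∀ x, x ∈ T.adjoint.domain ↔ J x ∈ T.domain)
    (hact : ∀ x (hx : x ∈ T.adjoint.domain),
      T.adjoint ⟨x, hx⟩ = J (T ⟨J x, (hdom x).mp hx⟩))
    (lam : ℂ)
    (hinj : ∀ x : T.domain, T x = lam • (x : E) → (x : E) = 0) :
    Dense (Set.range fun x : T.domain => T x - lam • (x : E)) := by
  refine (T.toFun - lam • T.domain.subtype).dense_range_of_forall_inner_eq_zero fun ψ hψ => ?_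
  have hψdom := T.mem_adjoint_domain_of_orthogonal hψ
  have hJψ : J ψ ∈ T.domain := (hdom ψ).mp hψdom
  have heigen : T ⟨J ψ, hJψ⟩ = lam • J ψ := by
    have h := hact ψ hψdom
    rw [T.adjoint_apply_of_orthogonal hdense hψ] at h
    rw [← hJinv (T _), ← h, hJsmul, Complex.conj_conj]
  have hJ0 : J 0 = 0 := by simpa using hJsmul 0 0
  have hJψ0 : J ψ = 0 := hinj ⟨J ψ, hJψ⟩ heigen
  rw [← hJinv ψ, hJψ0, hJ0]

/-- A densely defined closed J-self-adjoint operator on a complex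
Hilbert space has empty residual spectrum: if `H - λ` is injective then its
range is dense. -/
theorem stmt0 {E : Type*} [NormedAddCommGroup E] [InnerProductSpace ℂ E]
    [CompleteSpace E]
    (T : E →ₗ.[ℂ] E) (hdense : Dense (T.domain : Set E)) (hclosed : T.IsClosed)
    (J : E → E)
    (hJadd : ∀ x y, J (x + y) = J x + J y)
    (hJsmul : ∀ (a : ℂ) (x : E), J (a • x) = (starRingEnd ℂ a) • J x)
    (hJinv : ∀ x, J (J x) = x)
    (hJinner : ∀ x y, ⟪J x, J y⟫_ℂ = ⟪y, x⟫_ℂ)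
    -- `H* = J H J` : the adjoint has domain `J⁻¹(dom H)` and acts as `J ∘ H ∘ J`
    (hdom : ∀ x, x ∈ T.adjoint.domain ↔ J x ∈ T.domain)
    (hact : ∀ x (hx : x ∈ T.adjoint.domain),
      T.adjoint ⟨x, hx⟩ = J (T ⟨J x, (hdom x).mp hx⟩))
    (lam : ℂ)
    (hinj : ∀ x : T.domain, T x = lam • (x : E) → (x : E) = 0) :
    Dense (Set.range fun x : T.domain => T x - lam • (x : E)) :=
  stmt0_general T hdense J hJsmul hJinv hdom hact lam hinj
end

section
/- Let d > 0, α₀ ∈ ℝ with α₀d/π ∉ ℤ∖{0}, and for j ≥ 2 set ψ_j(x₂) = cos(μ_j x₂) − i(α₀/μ_j) sin(μ_j x₂), φ_j(x₂) = conj(A_j ψ_j(x₂)) with A_j = 2μ_j²/((μ_j² − α₀²)d) and μ_j = πj/d. Then for all integers j, k ≥ 2, ∫₀^d ψ_j(x₂) conj(φ_k(x₂)) dx₂ = δ_{jk} (the biorthonormality relation). -/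
open MeasureTheory

/-!
Since `conj (φ_k) = A_k ψ_k`, the claim is `∫₀^d ψ_j ψ_k = δ_{jk} / A_k`. By the product-to-sum
formulas, the real part of `ψ_j ψ_k` is a combination of `cos ((μ_j ± μ_k) x)`, which integrate to
zero over `(0, d)` unless the frequency vanishes, and its imaginary part is a multiple of the
derivative of `sin (μ_j x) sin (μ_k x)`, which vanishes at both ends. Hence
`∫₀^d ψ_j ψ_k = δ_{jk} (1 - α₀² / μ_j²) d / 2`, and the hypothesis on `α₀` says exactly that
`μ_k² ≠ α₀²`, so that this is `δ_{jk} / A_k`.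
-/

noncomputable def psiMode (a p : ℂ) (x : ℝ) : ℂ :=
  Complex.cos (p * x) - Complex.I * (a / p) * Complex.sin (p * x)

lemma psiMode_mul_psiMode (a : ℂ) {p q : ℂ} (hp : p ≠ 0) (hq : q ≠ 0) (x : ℝ) :
    psiMode a p x * psiMode a q x =
      (1 + a ^ 2 / (p * q)) / 2 * Complex.cos ((p + q) * x)
        + (1 - a ^ 2 / (p * q)) / 2 * Complex.cos ((p - q) * x)
        - Complex.I * (a / (p * q)) *
          (p * Complex.cos (p * x) * Complex.sin (q * x)
            + q * Complex.sin (p * x) * Complex.cos (q * x)) := by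
  rw [psiMode, psiMode, add_mul p, sub_mul p, Complex.cos_add, Complex.cos_sub]
  generalize Complex.cos (p * x) = cp, Complex.sin (p * x) = sp, Complex.cos (q * x) = cq,
    Complex.sin (q * x) = sq
  field_simp
  linear_combination (2 * a ^ 2 * sp * sq) * Complex.I_sq

lemma hasDerivAt_sin_mul_ofReal (p : ℂ) (x : ℝ) :
    HasDerivAt (fun y : ℝ => Complex.sin (p * y)) (p * Complex.cos (p * x)) x := by
  simpa [mul_comm] using ((Complex.hasDerivAt_sin (p * x)).comp (x : ℂ)
    ((hasDerivAt_id (x : ℂ)).const_mul p)).comp_ofReal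

lemma integral_deriv_sin_mul_sin (p q : ℂ) (d : ℝ) :
    ∫ x in (0 : ℝ)..d, (p * Complex.cos (p * x) * Complex.sin (q * x)
        + q * Complex.sin (p * x) * Complex.cos (q * x)) =
      Complex.sin (p * d) * Complex.sin (q * d) := by
  rw [intervalIntegral.integral_eq_sub_of_hasDerivAt
    (f := fun x : ℝ => Complex.sin (p * x) * Complex.sin (q * x))
    (fun x _ => ((hasDerivAt_sin_mul_ofReal p x).mul (hasDerivAt_sin_mul_ofReal q x)).congr_deriv
      (by ring))
    (by apply Continuous.intervalIntegrable; fun_prop)]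
  simp

lemma integral_cos_mul_eq_zero {ν : ℂ} (hν : ν ≠ 0) {d : ℝ} (h : Complex.sin (ν * d) = 0) :
    ∫ x in (0 : ℝ)..d, Complex.cos (ν * x) = 0 := by
  simp [integral_cos_mul_complex hν, h]

lemma integral_psiMode_mul_psiMode (a : ℂ) {p q : ℂ} (hp : p ≠ 0) (hq : q ≠ 0) (hpq : p + q ≠ 0)
    {d : ℝ} (hpd : Complex.sin (p * d) = 0) (hqd : Complex.sin (q * d) = 0) :
    ∫ x in (0 : ℝ)..d, psiMode a p x * psiMode a q x =
      if p = q then (1 - a ^ 2 / p ^ 2) * d / 2 else 0 := by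
  have hsum : Complex.sin ((p + q) * d) = 0 := by simp [add_mul, Complex.sin_add, hpd, hqd]
  have hdiff : Complex.sin ((p - q) * d) = 0 := by simp [sub_mul, Complex.sin_sub, hpd, hqd]
  simp_rw [psiMode_mul_psiMode a hp hq]
  rw [intervalIntegral.integral_sub, intervalIntegral.integral_add,
    intervalIntegral.integral_const_mul, intervalIntegral.integral_const_mul,
    intervalIntegral.integral_const_mul, integral_deriv_sin_mul_sin, hpd,
    integral_cos_mul_eq_zero hpq hsum]
  split_ifs with h
  · subst h
    simp
    ring
  · rw [integral_cos_mul_eq_zero (sub_ne_zero.mpr h) hdiff]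
    simp
  all_goals apply Continuous.intervalIntegrable; fun_prop

lemma pi_mul_div_sq_ne_sq {d α : ℝ} (hd : d ≠ 0)
    (hα : ∀ n : ℤ, n ≠ 0 → α * d / Real.pi ≠ n) {m : ℕ} (hm : m ≠ 0) :
    (Real.pi * m / d) ^ 2 ≠ α ^ 2 := by
  intro h
  rcases sq_eq_sq_iff_eq_or_eq_neg.mp h.symm with h | h
  · exact hα m (by exact_mod_cast hm) (by rw [h]; push_cast; field_simp)
  · exact hα (-m) (by simpa using hm) (by rw [h]; push_cast; field_simp)

/-- biorthonormality `(ψ_j, φ_k)_{L²(0,d)} = δ_{jk}` for `j,k ≥ 2`,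
where `ψ_j(x₂) = cos(μ_j x₂) - i(α₀/μ_j) sin(μ_j x₂)`,
`φ_j = conj(A_j ψ_j)` and `A_j = 2μ_j²/((μ_j² - α₀²)d)`, `μ_j = πj/d`,
under the non-degeneracy hypothesis `α₀ d/π ∉ ℤ∖{0}`. -/
theorem stmt6 (d : ℝ) (hd : 0 < d) (α₀ : ℝ)
    (hyp : ∀ n : ℤ, n ≠ 0 → α₀ * d / Real.pi ≠ (n : ℝ)) :
    let μ : ℕ → ℝ := fun j => Real.pi * j / d
    let ψ : ℕ → ℝ → ℂ := fun j x₂ =>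
      Complex.cos (μ j * x₂) -
        Complex.I * ((α₀ : ℂ) / (μ j)) * Complex.sin (μ j * x₂)
    let A : ℕ → ℂ := fun j => 2 * (μ j : ℂ) ^ 2 / (((μ j : ℂ) ^ 2 - (α₀ : ℂ) ^ 2) * d)
    let φ : ℕ → ℝ → ℂ := fun j x₂ => starRingEnd ℂ (A j * ψ j x₂)
    ∀ j k : ℕ, 2 ≤ j → 2 ≤ k →
      ∫ x₂ in (0 : ℝ)..d, ψ j x₂ * starRingEnd ℂ (φ k x₂) =
        if j = k then 1 else 0 := by
  intro μ ψ A φ j k hj hk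
  have hd_ne : (d : ℂ) ≠ 0 := by exact_mod_cast hd.ne'
  have hμ_pos : ∀ m, 2 ≤ m → 0 < μ m := fun m hm => by
    have : (0 : ℝ) < m := by exact_mod_cast (by omega : 0 < m)
    positivity
  have hμ_ne : ∀ m, 2 ≤ m → (μ m : ℂ) ≠ 0 := fun m hm => by exact_mod_cast (hμ_pos m hm).ne'
  have hsin : ∀ m, Complex.sin (μ m * d) = 0 := fun m => by
    rw [← Complex.sin_nat_mul_pi m]; congr 1; simp only [μ]; push_cast; field_simp
  have hμ_inj : (μ j : ℂ) = μ k ↔ j = k := by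
    simp only [μ, Complex.ofReal_inj]
    field_simp
    exact_mod_cast Nat.cast_inj
  have hA : A k * ((1 - (α₀ : ℂ) ^ 2 / (μ k : ℂ) ^ 2) * d / 2) = 1 := by
    have : (μ k : ℂ) ^ 2 - (α₀ : ℂ) ^ 2 ≠ 0 :=
      sub_ne_zero.mpr (by exact_mod_cast pi_mul_div_sq_ne_sq hd.ne' hyp (by omega))
    simp only [A]
    field_simp [hμ_ne k hk]
  calc ∫ x in (0 : ℝ)..d, ψ j x * starRingEnd ℂ (φ k x)
      = ∫ x in (0 : ℝ)..d, A k * (psiMode α₀ (μ j) x * psiMode α₀ (μ k) x) := by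
        congr 1 with x
        simp only [φ, Complex.conj_conj]
        exact mul_left_comm _ _ _
    _ = if j = k then 1 else 0 := by
        rw [intervalIntegral.integral_const_mul, integral_psiMode_mul_psiMode _ (hμ_ne j hj)
          (hμ_ne k hk) (by exact_mod_cast (add_pos (hμ_pos j hj) (hμ_pos k hk)).ne') (hsin j)
          (hsin k)]
        simp only [hμ_inj]
        split_ifs with h
        · subst h; exact hA
        · simp
end

section
/- Let Ω = ℝ × (0,d), α₀ ∈ ℝ, and φ ∈ L²(∂Ω). There exist constants c, C > 0 depending only on d and |α₀| such that every weak solution Ψ ∈ W^{1,2}(Ω) of −ΔΨ − zΨ = 0 in Ω with boundary condition ∂₂Ψ + iα₀Ψ = φ on ∂Ω, for any real z ≤ −c, satisfies ‖Ψ‖_{W^{1,2}(Ω)} ≤ C ‖φ‖_{L²(∂Ω)}. -/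
/-!
Test the equation against `Ψ` itself: for real `z` the Robin term `iα₀Ψ` contributes nothing to
`Re (∂₂Ψ · conj Ψ)` on the boundary, so integrating by parts (in `x₂` by the fundamental theorem of
calculus, in `x₁` using that `Ψ` and `∇Ψ` are square integrable) gives the energy identity
`-z‖Ψ‖² + ‖∂₁Ψ‖² + ‖∂₂Ψ‖² = ∫ Re (φ_d · conj Ψ(·, d)) - ∫ Re (φ₀ · conj Ψ(·, 0))`.
The boundary values of `Ψ` are controlled by the one-dimensional trace inequality
`|f(y)|² ≤ (1/d) ∫₀ᵈ |f|² + 2 ∫₀ᵈ |f| |f'|` applied on every vertical line, and Young's inequality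
absorbs them into the left-hand side as soon as `z ≤ -1`.
-/

open MeasureTheory Set Filter Topology
open scoped RealInnerProductSpace Interval

section Calculus

variable {F : Type*} [NormedAddCommGroup F] [NormedSpace ℝ F]

theorem ContinuousLinearMap.opNorm_le_norm_apply_fst_add_snd (L : ℝ × ℝ →L[ℝ] F) :
    ‖L‖ ≤ ‖L (1, 0)‖ + ‖L (0, 1)‖ := by
  refine L.opNorm_le_bound (by positivity) fun v => ?_
  have hv : L v = v.1 • L (1, 0) + v.2 • L (0, 1) := by
    rw [← L.map_smul, ← L.map_smul, ← map_add]; congr 1; ext <;> simp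
  calc ‖L v‖ ≤ ‖v.1‖ * ‖L (1, 0)‖ + ‖v.2‖ * ‖L (0, 1)‖ := by
        rw [hv, ← norm_smul, ← norm_smul]; exact norm_add_le _ _
    _ ≤ ‖v‖ * ‖L (1, 0)‖ + ‖v‖ * ‖L (0, 1)‖ := by
        gcongr
        exacts [_root_.norm_fst_le v, _root_.norm_snd_le v]
    _ = (‖L (1, 0)‖ + ‖L (0, 1)‖) * ‖v‖ := by ring

theorem ContinuousLinearMap.sq_opNorm_le (L : ℝ × ℝ →L[ℝ] F) :
    ‖L‖ ^ 2 ≤ 2 * (‖L (1, 0)‖ ^ 2 + ‖L (0, 1)‖ ^ 2) := by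
  nlinarith [L.opNorm_le_norm_apply_fst_add_snd, norm_nonneg L,
    sq_nonneg (‖L (1, 0)‖ - ‖L (0, 1)‖)]

theorem HasFDerivAt.hasDerivAt_fst {g : ℝ × ℝ → F} {g' : ℝ × ℝ →L[ℝ] F} {a t : ℝ}
    (hg : HasFDerivAt g g' (a, t)) : HasDerivAt (fun s => g (s, t)) (g' (1, 0)) a :=
  hg.comp_hasDerivAt a ((hasDerivAt_id a).prodMk (hasDerivAt_const a t))

theorem HasFDerivAt.hasDerivAt_snd {g : ℝ × ℝ → F} {g' : ℝ × ℝ →L[ℝ] F} {a t : ℝ}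
    (hg : HasFDerivAt g g' (a, t)) : HasDerivAt (fun s => g (a, s)) (g' (0, 1)) t :=
  hg.comp_hasDerivAt t ((hasDerivAt_const t a).prodMk (hasDerivAt_id t))

end Calculus

section L2

variable {α : Type*} [MeasurableSpace α] {μ : Measure α}

theorem MeasureTheory.MemLp.integrable_sq_norm {F : Type*} [NormedAddCommGroup F] {f : α → F}
    (hf : MemLp f 2 μ) :
    Integrable (fun x => ‖f x‖ ^ 2) μ :=
  (memLp_two_iff_integrable_sq_norm hf.1).1 hf

theorem integral_sq_opNorm_le {F : Type*} [NormedAddCommGroup F] [NormedSpace ℝ F]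
    {L : α → ℝ × ℝ →L[ℝ] F} (hL : MemLp L 2 μ) :
    ∫ x, ‖L x‖ ^ 2 ∂μ ≤ 2 * (∫ x, ‖L x (1, 0)‖ ^ 2 ∂μ + ∫ x, ‖L x (0, 1)‖ ^ 2 ∂μ) := by
  have happly (v : ℝ × ℝ) : Integrable (fun x => ‖L x v‖ ^ 2) μ :=
    ((ContinuousLinearMap.apply ℝ F v).comp_memLp' hL).integrable_sq_norm
  rw [← integral_add (happly _) (happly _), ← integral_const_mul]
  exact integral_mono hL.integrable_sq_norm (((happly _).add (happly _)).const_mul 2)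
    fun x => (L x).sq_opNorm_le

variable {E : Type*} [NormedAddCommGroup E] [InnerProductSpace ℝ E]

theorem real_inner_le_young (x y : E) {ε : ℝ} (hε : 0 < ε) :
    ⟪x, y⟫ ≤ (ε * ‖x‖ ^ 2 + ε⁻¹ * ‖y‖ ^ 2) / 2 := by
  have key : 2 * ε * (‖x‖ * ‖y‖) ≤ ε ^ 2 * ‖x‖ ^ 2 + ‖y‖ ^ 2 := by
    nlinarith [sq_nonneg (ε * ‖x‖ - ‖y‖)]
  calc ⟪x, y⟫ ≤ ‖x‖ * ‖y‖ := real_inner_le_norm x y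
    _ ≤ (ε ^ 2 * ‖x‖ ^ 2 + ‖y‖ ^ 2) / (2 * ε) := by rw [le_div_iff₀ (by positivity)]; linarith
    _ = (ε * ‖x‖ ^ 2 + ε⁻¹ * ‖y‖ ^ 2) / 2 := by field_simp

theorem MeasureTheory.MemLp.integrable_inner {f g : α → E} (hf : MemLp f 2 μ)
    (hg : MemLp g 2 μ) :
    Integrable (fun x => ⟪f x, g x⟫) μ :=
  (L2.integrable_inner (𝕜 := ℝ) (hf.toLp f) (hg.toLp g)).congr <| by
    filter_upwards [hf.coeFn_toLp, hg.coeFn_toLp] with x hfx hgx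
    rw [hfx, hgx]

theorem integral_inner_le_young {f g : α → E} (hf : MemLp f 2 μ) (hg : MemLp g 2 μ) {ε : ℝ}
    (hε : 0 < ε) :
    ∫ x, ⟪f x, g x⟫ ∂μ ≤ (ε * ∫ x, ‖f x‖ ^ 2 ∂μ + ε⁻¹ * ∫ x, ‖g x‖ ^ 2 ∂μ) / 2 := by
  have hf2 := hf.integrable_sq_norm.const_mul ε
  have hg2 := hg.integrable_sq_norm.const_mul ε⁻¹
  rw [← integral_const_mul, ← integral_const_mul, ← integral_add hf2 hg2, ← integral_div]
  exact integral_mono (hf.integrable_inner hg) ((hf2.add hg2).div_const 2)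
    fun x => real_inner_le_young _ _ hε

end L2

theorem Complex.real_inner_eq_of_add_I_mul_eq {w p φ : ℂ} {α : ℝ}
    (h : p + Complex.I * α * w = φ) : ⟪w, p⟫ = ⟪w, φ⟫ := by
  rw [← h, inner_add_right, Complex.inner w (_ * w), mul_assoc, Complex.mul_conj]
  simp

section Strip

variable {F : Type*} [NormedAddCommGroup F] [NormedSpace ℝ F]

theorem volume_restrict_univ_prod_Ioo (d : ℝ) :
    volume.restrict (univ ×ˢ Ioo 0 d : Set (ℝ × ℝ)) =
      volume.prod (volume.restrict (Ioc 0 d)) := by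
  rw [Measure.volume_eq_prod, ← Measure.prod_restrict, Measure.restrict_univ,
    Measure.restrict_congr_set Ioo_ae_eq_Ioc]

theorem integral_univ_prod_Ioo {f : ℝ × ℝ → F} {d : ℝ} (hd : 0 ≤ d)
    (hf : Integrable f (volume.restrict (univ ×ˢ Ioo 0 d))) :
    ∫ x in univ ×ˢ Ioo 0 d, f x = ∫ a, ∫ t in 0..d, f (a, t) := by
  rw [volume_restrict_univ_prod_Ioo] at hf ⊢
  simp_rw [integral_prod _ hf, intervalIntegral.integral_of_le hd]

theorem MeasureTheory.Integrable.intervalIntegral_univ_prod_Ioo {f : ℝ × ℝ → F} {d : ℝ}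
    (hd : 0 ≤ d) (hf : Integrable f (volume.restrict (univ ×ˢ Ioo 0 d))) :
    Integrable fun a => ∫ t in 0..d, f (a, t) := by
  rw [volume_restrict_univ_prod_Ioo] at hf
  simpa only [intervalIntegral.integral_of_le hd] using hf.integral_prod_left

theorem integral_intervalIntegral_eq_zero_of_hasDerivAt_fst {g g' : ℝ × ℝ → F} {d : ℝ}
    (hd : 0 ≤ d) (hg : Continuous g) (hg' : Continuous g')
    (hderiv : ∀ a t, HasDerivAt (fun s => g (s, t)) (g' (a, t)) a)
    (hgi : Integrable g (volume.restrict (univ ×ˢ Ioo 0 d)))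
    (hg'i : Integrable fun a => ∫ t in 0..d, g' (a, t)) :
    ∫ a, ∫ t in 0..d, g' (a, t) = 0 := by
  refine integral_eq_zero_of_hasDerivAt_of_integrable (fun a => ?_) hg'i
    (hgi.intervalIntegral_univ_prod_Ioo hd)
  obtain ⟨C, hC⟩ := ((isCompact_closedBall a 1).prod isCompact_uIcc).exists_bound_of_continuousOn
    hg'.continuousOn
  refine (intervalIntegral.hasDerivAt_integral_of_dominated_loc_of_deriv_le
    (F := fun x t => g (x, t)) (bound := fun _ => C) (Metric.ball_mem_nhds a one_pos)
    (Eventually.of_forall fun x => (hg.comp (by fun_prop)).aestronglyMeasurable)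
    ((hg.comp (by fun_prop)).intervalIntegrable _ _)
    (hg'.comp (by fun_prop)).aestronglyMeasurable ?_ intervalIntegrable_const
    (Eventually.of_forall fun t _ x _ => hderiv x t)).2
  exact Eventually.of_forall fun t ht x hx =>
    hC (x, t) ⟨Metric.ball_subset_closedBall hx, uIoc_subset_uIcc ht⟩

end Strip

section Trace

variable {E : Type*} [NormedAddCommGroup E] [InnerProductSpace ℝ E]

theorem sq_norm_le_sq_norm_add_intervalIntegral {f f' : ℝ → E} {d y t : ℝ}
    (hf : ∀ s, HasDerivAt f (f' s) s) (hf' : Continuous f') (hy : y ∈ Icc 0 d)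
    (ht : t ∈ Icc 0 d) :
    ‖f y‖ ^ 2 ≤ ‖f t‖ ^ 2 + 2 * ∫ s in 0..d, ‖f s‖ * ‖f' s‖ := by
  have hfc : Continuous f := continuous_iff_continuousAt.2 fun s => (hf s).continuousAt
  have hg : Continuous fun s => 2 * (‖f s‖ * ‖f' s‖) := by fun_prop
  have hftc : ∫ s in t..y, 2 * ⟪f s, f' s⟫ = ‖f y‖ ^ 2 - ‖f t‖ ^ 2 :=
    intervalIntegral.integral_eq_sub_of_hasDerivAt (fun s _ => (hf s).norm_sq)
      ((continuous_const.mul (hfc.inner hf')).intervalIntegrable t y)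
  have hsub : Ι t y ⊆ Ioc 0 d := by
    rw [← uIoc_of_le (ht.1.trans ht.2)]
    refine uIoc_subset_uIoc_of_uIcc_subset_uIcc (uIcc_subset_uIcc ?_ ?_) <;>
      rwa [uIcc_of_le (ht.1.trans ht.2)]
  calc ‖f y‖ ^ 2 = ‖f t‖ ^ 2 + ∫ s in t..y, 2 * ⟪f s, f' s⟫ := by rw [hftc]; ring
    _ ≤ ‖f t‖ ^ 2 + ∫ s in Ι t y, ‖2 * ⟪f s, f' s⟫‖ := by
        gcongr
        exact (Real.le_norm_self _).trans intervalIntegral.norm_integral_le_integral_norm_uIoc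
    _ ≤ ‖f t‖ ^ 2 + ∫ s in Ioc 0 d, 2 * (‖f s‖ * ‖f' s‖) := by
        gcongr ‖f t‖ ^ 2 + ?_
        refine (setIntegral_mono_on ?_ ?_ measurableSet_uIoc fun s _ => ?_).trans
          (setIntegral_mono_set ?_ ?_ hsub.eventuallyLE)
        · exact (continuous_const.mul (hfc.inner hf')).norm.integrableOn_uIoc
        · exact hg.integrableOn_uIoc
        · rw [norm_mul, Real.norm_two]
          gcongr
          exact norm_inner_le_norm _ _
        · exact hg.integrableOn_Ioc
        · exact Eventually.of_forall fun s => by positivity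
    _ = ‖f t‖ ^ 2 + 2 * ∫ s in 0..d, ‖f s‖ * ‖f' s‖ := by
        rw [intervalIntegral.integral_of_le (hy.1.trans hy.2), integral_const_mul]

theorem sq_norm_le_intervalIntegral {f f' : ℝ → E} {d y : ℝ}
    (hf : ∀ s, HasDerivAt f (f' s) s) (hf' : Continuous f') (hd : 0 < d) (hy : y ∈ Icc 0 d) :
    ‖f y‖ ^ 2 ≤ (∫ s in 0..d, ‖f s‖ ^ 2) / d + 2 * ∫ s in 0..d, ‖f s‖ * ‖f' s‖ := by
  have hfc : Continuous f := continuous_iff_continuousAt.2 fun s => (hf s).continuousAt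
  set W := ∫ s in 0..d, ‖f s‖ * ‖f' s‖
  have hJ : IntervalIntegrable (fun s => ‖f s‖ ^ 2) volume 0 d := by
    apply Continuous.intervalIntegrable; fun_prop
  have havg : d * ‖f y‖ ^ 2 ≤ (∫ s in 0..d, ‖f s‖ ^ 2) + d * (2 * W) := by
    calc d * ‖f y‖ ^ 2 = ∫ _ in 0..d, ‖f y‖ ^ 2 := by simp
      _ ≤ ∫ t in 0..d, (‖f t‖ ^ 2 + 2 * W) :=
        intervalIntegral.integral_mono_on hd.le intervalIntegrable_const
          (hJ.add intervalIntegrable_const)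
          fun t ht => sq_norm_le_sq_norm_add_intervalIntegral hf hf' hy ht
      _ = (∫ s in 0..d, ‖f s‖ ^ 2) + d * (2 * W) := by
        rw [intervalIntegral.integral_add hJ intervalIntegrable_const]; simp; ring
  rw [div_add' _ _ _ hd.ne', le_div_iff₀ hd]
  linarith

theorem memLp_slice_and_integral_sq_norm_le {u : ℝ × ℝ → E} {d y : ℝ} (hd : 0 < d)
    (hy : y ∈ Icc 0 d) (hu : ContDiff ℝ 1 u) (hu2 : MemLp u 2 (volume.restrict (univ ×ˢ Ioo 0 d)))
    (hp₂ : MemLp (fun x => fderiv ℝ u x (0, 1)) 2 (volume.restrict (univ ×ˢ Ioo 0 d))) :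
    MemLp (fun a => u (a, y)) 2 volume ∧
      ∫ a, ‖u (a, y)‖ ^ 2 ≤ (1 / d + 1) * (∫ x in univ ×ˢ Ioo 0 d, ‖u x‖ ^ 2) +
        ∫ x in univ ×ˢ Ioo 0 d, ‖fderiv ℝ u x (0, 1)‖ ^ 2 := by
  set p₂ := fun x => fderiv ℝ u x (0, 1)
  have hbound : ∀ a, ‖u (a, y)‖ ^ 2 ≤ (∫ t in 0..d, ‖u (a, t)‖ ^ 2) / d +
      2 * ∫ t in 0..d, ‖u (a, t)‖ * ‖p₂ (a, t)‖ := fun a =>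
    sq_norm_le_intervalIntegral
      (fun s => ((hu.differentiable one_ne_zero) (a, s)).hasFDerivAt.hasDerivAt_snd)
      (by fun_prop) hd hy
  have hJ := hu2.integrable_sq_norm
  have hB := hp₂.integrable_sq_norm
  have hW : Integrable (fun x => ‖u x‖ * ‖p₂ x‖) (volume.restrict (univ ×ˢ Ioo 0 d)) :=
    hu2.norm.integrable_mul hp₂.norm
  have hR := ((hJ.intervalIntegral_univ_prod_Ioo hd.le).div_const d).add
    ((hW.intervalIntegral_univ_prod_Ioo hd.le).const_mul 2)
  have hslice : Continuous fun a => u (a, y) := by fun_prop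
  have hslice2 : Integrable fun a => ‖u (a, y)‖ ^ 2 :=
    hR.mono' (by fun_prop : Continuous fun a => ‖u (a, y)‖ ^ 2).aestronglyMeasurable
      (Eventually.of_forall fun a => by
        rw [Real.norm_of_nonneg (by positivity)]; exact hbound a)
  have hW2 : 2 * ∫ x in univ ×ˢ Ioo 0 d, ‖u x‖ * ‖p₂ x‖ ≤
      (∫ x in univ ×ˢ Ioo 0 d, ‖u x‖ ^ 2) + ∫ x in univ ×ˢ Ioo 0 d, ‖p₂ x‖ ^ 2 := by
    rw [← integral_const_mul, ← integral_add hJ hB]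
    exact integral_mono (hW.const_mul 2) (hJ.add hB) fun x =>
      (mul_assoc _ _ _).symm.trans_le (two_mul_le_add_sq _ _)
  refine ⟨(memLp_two_iff_integrable_sq_norm hslice.aestronglyMeasurable).2 hslice2, ?_⟩
  calc ∫ a, ‖u (a, y)‖ ^ 2
      ≤ ∫ a, ((∫ t in 0..d, ‖u (a, t)‖ ^ 2) / d + 2 * ∫ t in 0..d, ‖u (a, t)‖ * ‖p₂ (a, t)‖) :=
        integral_mono hslice2 hR hbound
    _ = (∫ x in univ ×ˢ Ioo 0 d, ‖u x‖ ^ 2) / d +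
          2 * ∫ x in univ ×ˢ Ioo 0 d, ‖u x‖ * ‖p₂ x‖ := by
        rw [integral_add ((hJ.intervalIntegral_univ_prod_Ioo hd.le).div_const d)
            ((hW.intervalIntegral_univ_prod_Ioo hd.le).const_mul 2), integral_div,
          integral_const_mul, integral_univ_prod_Ioo hd.le hJ, integral_univ_prod_Ioo hd.le hW]
    _ ≤ _ := by rw [add_mul, one_div_mul_eq_div, one_mul, add_assoc]; linarith

end Trace

section Green

variable {E : Type*} [NormedAddCommGroup E] [InnerProductSpace ℝ E]

theorem hasDerivAt_inner_fderiv_apply_fst {u : ℝ × ℝ → E} (hu : ContDiff ℝ 2 u) (a t : ℝ) :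
    HasDerivAt (fun s => ⟪u (s, t), fderiv ℝ u (s, t) (1, 0)⟫)
      (⟪u (a, t), fderiv ℝ (fun x => fderiv ℝ u x (1, 0)) (a, t) (1, 0)⟫ +
        ‖fderiv ℝ u (a, t) (1, 0)‖ ^ 2) a := by
  have hp : ContDiff ℝ 1 fun x => fderiv ℝ u x (1, 0) :=
    (hu.fderiv_right (m := 1) (by norm_num)).clm_apply contDiff_const
  refine ((hu.differentiable two_ne_zero (a, t)).hasFDerivAt.hasDerivAt_fst.inner ℝ
    ((hp.differentiable one_ne_zero) (a, t)).hasFDerivAt.hasDerivAt_fst).congr_deriv ?_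
  simp only [real_inner_self_eq_norm_sq]

theorem hasDerivAt_inner_fderiv_apply_snd {u : ℝ × ℝ → E} (hu : ContDiff ℝ 2 u) (a t : ℝ) :
    HasDerivAt (fun s => ⟪u (a, s), fderiv ℝ u (a, s) (0, 1)⟫)
      (⟪u (a, t), fderiv ℝ (fun x => fderiv ℝ u x (0, 1)) (a, t) (0, 1)⟫ +
        ‖fderiv ℝ u (a, t) (0, 1)‖ ^ 2) t := by
  have hp : ContDiff ℝ 1 fun x => fderiv ℝ u x (0, 1) :=
    (hu.fderiv_right (m := 1) (by norm_num)).clm_apply contDiff_const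
  refine ((hu.differentiable two_ne_zero (a, t)).hasFDerivAt.hasDerivAt_snd.inner ℝ
    ((hp.differentiable one_ne_zero) (a, t)).hasFDerivAt.hasDerivAt_snd).congr_deriv ?_
  simp only [real_inner_self_eq_norm_sq]

theorem intervalIntegral_energy_eq {u : ℝ × ℝ → E} {z d : ℝ} (hd : 0 ≤ d) (hu : ContDiff ℝ 2 u)
    (hpde : ∀ x ∈ univ ×ˢ Ioo 0 d,
      -(fderiv ℝ (fun y => fderiv ℝ u y (1, 0)) x (1, 0) +
          fderiv ℝ (fun y => fderiv ℝ u y (0, 1)) x (0, 1)) = z • u x)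
    (a : ℝ) :
    ∫ t in 0..d,
        (-z * ‖u (a, t)‖ ^ 2 + ‖fderiv ℝ u (a, t) (1, 0)‖ ^ 2 + ‖fderiv ℝ u (a, t) (0, 1)‖ ^ 2) =
      (∫ t in 0..d, (⟪u (a, t), fderiv ℝ (fun x => fderiv ℝ u x (1, 0)) (a, t) (1, 0)⟫ +
          ‖fderiv ℝ u (a, t) (1, 0)‖ ^ 2)) +
        (⟪u (a, d), fderiv ℝ u (a, d) (0, 1)⟫ - ⟪u (a, 0), fderiv ℝ u (a, 0) (0, 1)⟫) := by
  have hp (v : ℝ × ℝ) : ContDiff ℝ 1 fun x => fderiv ℝ u x v :=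
    (hu.fderiv_right (m := 1) (by norm_num)).clm_apply contDiff_const
  set h₁ := fun t => ⟪u (a, t), fderiv ℝ (fun x => fderiv ℝ u x (1, 0)) (a, t) (1, 0)⟫ +
    ‖fderiv ℝ u (a, t) (1, 0)‖ ^ 2
  set k₂ := fun t => ⟪u (a, t), fderiv ℝ (fun x => fderiv ℝ u x (0, 1)) (a, t) (0, 1)⟫ +
    ‖fderiv ℝ u (a, t) (0, 1)‖ ^ 2
  have hh₁ : Continuous h₁ := by fun_prop
  have hk₂ : Continuous k₂ := by fun_prop
  rw [intervalIntegral.integral_congr_ae (g := fun t => h₁ t + k₂ t),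
    intervalIntegral.integral_add (hh₁.intervalIntegrable _ _) (hk₂.intervalIntegrable _ _),
    intervalIntegral.integral_eq_sub_of_hasDerivAt
      (fun t _ => hasDerivAt_inner_fderiv_apply_snd hu a t) (hk₂.intervalIntegrable _ _)]
  filter_upwards [Measure.ae_ne volume d] with t htd ht
  rw [uIoc_of_le hd] at ht
  have hsum := congrArg (⟪u (a, t), ·⟫)
    (neg_eq_iff_eq_neg.1 (hpde (a, t) ⟨trivial, ht.1, ht.2.lt_of_ne htd⟩))
  simp only [inner_add_right, inner_neg_right, real_inner_smul_right,
    real_inner_self_eq_norm_sq] at hsum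
  simp only [h₁, k₂]
  linarith

theorem integral_energy_eq_boundary {u : ℝ × ℝ → E} {z d : ℝ} (hd : 0 ≤ d)
    (hu : ContDiff ℝ 2 u) (hu2 : MemLp u 2 (volume.restrict (univ ×ˢ Ioo 0 d)))
    (hp₁ : MemLp (fun x => fderiv ℝ u x (1, 0)) 2 (volume.restrict (univ ×ˢ Ioo 0 d)))
    (hp₂ : MemLp (fun x => fderiv ℝ u x (0, 1)) 2 (volume.restrict (univ ×ˢ Ioo 0 d)))
    (hpde : ∀ x ∈ univ ×ˢ Ioo 0 d,
      -(fderiv ℝ (fun y => fderiv ℝ u y (1, 0)) x (1, 0) +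
          fderiv ℝ (fun y => fderiv ℝ u y (0, 1)) x (0, 1)) = z • u x)
    (hb : Integrable fun a =>
      ⟪u (a, d), fderiv ℝ u (a, d) (0, 1)⟫ - ⟪u (a, 0), fderiv ℝ u (a, 0) (0, 1)⟫) :
    ∫ x in univ ×ˢ Ioo 0 d,
        (-z * ‖u x‖ ^ 2 + ‖fderiv ℝ u x (1, 0)‖ ^ 2 + ‖fderiv ℝ u x (0, 1)‖ ^ 2) =
      ∫ a, (⟪u (a, d), fderiv ℝ u (a, d) (0, 1)⟫ - ⟪u (a, 0), fderiv ℝ u (a, 0) (0, 1)⟫) := by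
  have hp₁c : ContDiff ℝ 1 fun x => fderiv ℝ u x (1, 0) :=
    (hu.fderiv_right (m := 1) (by norm_num)).clm_apply contDiff_const
  have he : Integrable (fun x => -z * ‖u x‖ ^ 2 + ‖fderiv ℝ u x (1, 0)‖ ^ 2 +
      ‖fderiv ℝ u x (0, 1)‖ ^ 2) (volume.restrict (univ ×ˢ Ioo 0 d)) :=
    ((hu2.integrable_sq_norm.const_mul (-z)).add hp₁.integrable_sq_norm).add
      hp₂.integrable_sq_norm
  -- Nothing is known about second derivatives in `L²`; the `x₁`-integrated second term is
  -- integrable only as the difference of two integrable functions.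
  have hh₁ : Integrable fun a => ∫ t in 0..d,
      (⟪u (a, t), fderiv ℝ (fun x => fderiv ℝ u x (1, 0)) (a, t) (1, 0)⟫ +
        ‖fderiv ℝ u (a, t) (1, 0)‖ ^ 2) :=
    ((he.intervalIntegral_univ_prod_Ioo hd).sub hb).congr <| Eventually.of_forall fun a => by
      simp only [Pi.sub_apply, intervalIntegral_energy_eq hd hu hpde a]
      ring
  rw [integral_univ_prod_Ioo hd he]
  simp_rw [intervalIntegral_energy_eq hd hu hpde]
  rw [integral_add hh₁ hb, integral_intervalIntegral_eq_zero_of_hasDerivAt_fst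
    (g' := fun x => ⟪u x, fderiv ℝ (fun y => fderiv ℝ u y (1, 0)) x (1, 0)⟫ +
      ‖fderiv ℝ u x (1, 0)‖ ^ 2)
    hd (by fun_prop) (by fun_prop) (hasDerivAt_inner_fderiv_apply_fst hu)
    (hu2.integrable_inner hp₁) hh₁, zero_add]

theorem integral_energy_le {u : ℝ × ℝ → E} {φ₀ φ_d : ℝ → E} {z d : ℝ} (hd : 0 < d)
    (hz : z ≤ -1) (hu : ContDiff ℝ 2 u) (hu2 : MemLp u 2 (volume.restrict (univ ×ˢ Ioo 0 d)))
    (hp₁ : MemLp (fun x => fderiv ℝ u x (1, 0)) 2 (volume.restrict (univ ×ˢ Ioo 0 d)))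
    (hp₂ : MemLp (fun x => fderiv ℝ u x (0, 1)) 2 (volume.restrict (univ ×ˢ Ioo 0 d)))
    (hpde : ∀ x ∈ univ ×ˢ Ioo 0 d,
      -(fderiv ℝ (fun y => fderiv ℝ u y (1, 0)) x (1, 0) +
          fderiv ℝ (fun y => fderiv ℝ u y (0, 1)) x (0, 1)) = z • u x)
    (hφ₀ : MemLp φ₀ 2 volume) (hφ_d : MemLp φ_d 2 volume)
    (hb₀ : ∀ a, ⟪u (a, 0), fderiv ℝ u (a, 0) (0, 1)⟫ = ⟪u (a, 0), φ₀ a⟫)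
    (hb_d : ∀ a, ⟪u (a, d), fderiv ℝ u (a, d) (0, 1)⟫ = ⟪u (a, d), φ_d a⟫) :
    (∫ x in univ ×ˢ Ioo 0 d, ‖u x‖ ^ 2) + (∫ x in univ ×ˢ Ioo 0 d, ‖fderiv ℝ u x (1, 0)‖ ^ 2) +
        ∫ x in univ ×ˢ Ioo 0 d, ‖fderiv ℝ u x (0, 1)‖ ^ 2 ≤
      2 * (1 / d + 1) * ((∫ a, ‖φ₀ a‖ ^ 2) + ∫ a, ‖φ_d a‖ ^ 2) := by
  obtain ⟨hT₀, hT₀le⟩ :=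
    memLp_slice_and_integral_sq_norm_le hd ⟨le_rfl, hd.le⟩ (hu.of_le one_le_two) hu2 hp₂
  obtain ⟨hT_d, hT_dle⟩ :=
    memLp_slice_and_integral_sq_norm_le hd ⟨hd.le, le_rfl⟩ (hu.of_le one_le_two) hu2 hp₂
  set c := 1 / d + 1
  have hc : 1 ≤ c := le_add_of_nonneg_left (by positivity)
  have hbdry :
      (fun a => ⟪u (a, d), fderiv ℝ u (a, d) (0, 1)⟫ - ⟪u (a, 0), fderiv ℝ u (a, 0) (0, 1)⟫) =
        fun a => ⟪u (a, d), φ_d a⟫ + ⟪u (a, 0), (-φ₀) a⟫ := by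
    ext a; rw [hb₀, hb_d, Pi.neg_apply, inner_neg_right, sub_eq_add_neg]
  have hgreen := integral_energy_eq_boundary hd.le hu hu2 hp₁ hp₂ hpde
    (hbdry ▸ (hT_d.integrable_inner hφ_d).add (hT₀.integrable_inner hφ₀.neg))
  have hM := hu2.integrable_sq_norm
  have hA := hp₁.integrable_sq_norm
  have hB := hp₂.integrable_sq_norm
  rw [hbdry, integral_add (hT_d.integrable_inner hφ_d) (hT₀.integrable_inner hφ₀.neg),
    integral_add (f := fun x => -z * ‖u x‖ ^ 2 + ‖fderiv ℝ u x (1, 0)‖ ^ 2)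
      ((hM.const_mul _).add hA) hB, integral_add (hM.const_mul _) hA,
    integral_const_mul] at hgreen
  have hY_d := integral_inner_le_young hT_d hφ_d (ε := (2 * c)⁻¹) (by positivity)
  have hY₀ := integral_inner_le_young hT₀ hφ₀.neg (ε := (2 * c)⁻¹) (by positivity)
  simp only [Pi.neg_apply, norm_neg, inv_inv] at hY₀ hY_d hgreen
  set M := ∫ x in univ ×ˢ Ioo 0 d, ‖u x‖ ^ 2
  set B := ∫ x in univ ×ˢ Ioo 0 d, ‖fderiv ℝ u x (0, 1)‖ ^ 2
  have hM0 : 0 ≤ M := integral_nonneg fun x => by positivity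
  have hA0 : 0 ≤ ∫ x in univ ×ˢ Ioo 0 d, ‖fderiv ℝ u x (1, 0)‖ ^ 2 :=
    integral_nonneg fun x => by positivity
  have hB0 : 0 ≤ B := integral_nonneg fun x => by positivity
  have habsorb : (2 * c)⁻¹ * (∫ a, ‖u (a, 0)‖ ^ 2) + (2 * c)⁻¹ * (∫ a, ‖u (a, d)‖ ^ 2) ≤ M + B :=
    calc _ ≤ (2 * c)⁻¹ * (2 * c * (M + B)) := by
          rw [← mul_add]
          gcongr
          nlinarith
      _ = M + B := by field_simp
  have hzM : M ≤ -z * M := le_mul_of_one_le_left hM0 (by linarith)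
  linarith

end Green

/-- a priori estimate for the boundary value problem
`-ΔΨ - zΨ = 0` in `Ω = ℝ × (0,d)` with `∂₂Ψ + iα₀Ψ = φ` on `∂Ω`:
there are `c, C > 0` (depending only on `d` and `|α₀|`) such that any solution
`Ψ ∈ W^{1,2}(Ω)` with `z ≤ -c` satisfies `‖Ψ‖_{W^{1,2}(Ω)} ≤ C‖φ‖_{L²(∂Ω)}`. -/
theorem stmt14 (d : ℝ) (hd : 0 < d) (α₀ : ℝ) :
    ∃ c C : ℝ, 0 < c ∧ 0 < C ∧
      ∀ (z : ℝ), z ≤ -c →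
      ∀ (φ0 φd : ℝ → ℂ), MemLp φ0 2 volume → MemLp φd 2 volume →
      ∀ (Ψ : ℝ × ℝ → ℂ), ContDiff ℝ 2 Ψ →
        MemLp Ψ 2 (volume.restrict (Set.univ ×ˢ Set.Ioo 0 d)) →
        MemLp (fun x => fderiv ℝ Ψ x) 2
          (volume.restrict (Set.univ ×ˢ Set.Ioo 0 d)) →
        -- the equation `-ΔΨ = zΨ` in `Ω`
        (∀ x ∈ (Set.univ ×ˢ Set.Ioo (0 : ℝ) d),
          -(fderiv ℝ (fun y => fderiv ℝ Ψ y (1, 0)) x (1, 0) +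
              fderiv ℝ (fun y => fderiv ℝ Ψ y (0, 1)) x (0, 1)) =
            (z : ℂ) * Ψ x) →
        -- the boundary conditions `∂₂Ψ + iα₀Ψ = φ` on the two boundary lines
        (∀ x₁ : ℝ, fderiv ℝ Ψ (x₁, 0) (0, 1) + Complex.I * α₀ * Ψ (x₁, 0) = φ0 x₁) →
        (∀ x₁ : ℝ, fderiv ℝ Ψ (x₁, d) (0, 1) + Complex.I * α₀ * Ψ (x₁, d) = φd x₁) →
        Real.sqrt ((∫ x in (Set.univ ×ˢ Set.Ioo (0 : ℝ) d), ‖Ψ x‖ ^ 2) +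
            ∫ x in (Set.univ ×ˢ Set.Ioo (0 : ℝ) d), ‖fderiv ℝ Ψ x‖ ^ 2) ≤
          C * Real.sqrt ((∫ x₁ : ℝ, ‖φ0 x₁‖ ^ 2) + ∫ x₁ : ℝ, ‖φd x₁‖ ^ 2) := by
  refine ⟨1, 2 * √(1 / d + 1), one_pos, by positivity, ?_⟩
  intro z hz φ0 φd hφ0 hφd Ψ hΨ hΨ2 hDΨ hpde hb0 hbd
  have hp (v : ℝ × ℝ) : MemLp (fun x => fderiv ℝ Ψ x v) 2 (volume.restrict (univ ×ˢ Ioo 0 d)) :=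
    (ContinuousLinearMap.apply ℝ ℂ v).comp_memLp' hDΨ
  have henergy := integral_energy_le hd hz hΨ hΨ2 (hp _) (hp _)
    (fun x hx => (hpde x hx).trans Complex.real_smul.symm) hφ0 hφd
    (fun a => Complex.real_inner_eq_of_add_I_mul_eq (hb0 a))
    (fun a => Complex.real_inner_eq_of_add_I_mul_eq (hbd a))
  have hgrad := integral_sq_opNorm_le hDΨ
  calc √((∫ x in univ ×ˢ Ioo 0 d, ‖Ψ x‖ ^ 2) + ∫ x in univ ×ˢ Ioo 0 d, ‖fderiv ℝ Ψ x‖ ^ 2)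
      ≤ √((2 * √(1 / d + 1)) ^ 2 * ((∫ a, ‖φ0 a‖ ^ 2) + ∫ a, ‖φd a‖ ^ 2)) := by
        gcongr
        rw [mul_pow, Real.sq_sqrt (by positivity)]
        have hM0 : 0 ≤ ∫ x in univ ×ˢ Ioo 0 d, ‖Ψ x‖ ^ 2 := integral_nonneg fun x => by positivity
        linarith
    _ = 2 * √(1 / d + 1) * √((∫ a, ‖φ0 a‖ ^ 2) + ∫ a, ‖φd a‖ ^ 2) := by
        rw [Real.sqrt_mul (sq_nonneg _), Real.sqrt_sq (by positivity)]
end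

section
/- Let d > 0, α₀ ∈ ℝ with α₀d/π ∉ ℤ∖{0}, and let the transverse eigenvalues be μ₀² < μ₁² < μ₂² < ⋯ with μ_j = πj/d for j ≥ 2 and {μ₀, μ₁} = {|α₀| ∧ π/d, |α₀| ∨ π/d} as in the threshold formula. Then the numbers μ_j² are pairwise distinct and all real, and μ_j → ∞; in particular the spectrum {μ_j²}_{j≥0} of the non-self-adjoint Robin operator −Δ^I_{α₀} is real and discrete with all eigenvalues simple. -/
open Filter

/-! The squares `μ_j²` are, up to the transposition of the indices `0` and `1` made by the
threshold rule, the sequence `α₀², (π/d)², (2π/d)², …`. The non-degeneracy hypothesis says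
exactly that `α₀ ≠ ±πk/d` for `k ≥ 1`, so this sequence is injective, and it tends to `∞`
like `(πj/d)²`; both properties survive a permutation of the indices. -/

noncomputable def sqSeqWithHead (a c : ℝ) (j : ℕ) : ℝ :=
  if j = 0 then a ^ 2 else (c * j) ^ 2

lemma injective_mul_natCast_sq {c : ℝ} (hc : c ≠ 0) :
    Function.Injective fun j : ℕ => (c * j) ^ 2 := by
  intro i j h
  have hij : (i : ℝ) ^ 2 = (j : ℝ) ^ 2 := by
    simpa only [mul_pow, mul_right_inj' (pow_ne_zero 2 hc)] using h
  exact_mod_cast (pow_left_inj₀ (Nat.cast_nonneg i) (Nat.cast_nonneg j) two_ne_zero).mp hij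

lemma sqSeqWithHead_injective {a c : ℝ} (hc : c ≠ 0)
    (ha : ∀ k : ℕ, k ≠ 0 → a ^ 2 ≠ (c * k) ^ 2) :
    Function.Injective (sqSeqWithHead a c) := by
  intro i j h
  unfold sqSeqWithHead at h
  split_ifs at h with hi hj hj
  · exact hi.trans hj.symm
  · exact absurd h (ha j hj)
  · exact absurd h.symm (ha i hi)
  · exact injective_mul_natCast_sq hc h

lemma tendsto_sqSeqWithHead {a c : ℝ} (hc : c ≠ 0) :
    Tendsto (sqSeqWithHead a c) atTop atTop := by
  have hsq : Tendsto (fun j : ℕ => c ^ 2 * (j : ℝ) ^ 2) atTop atTop :=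
    ((tendsto_pow_atTop two_ne_zero).comp tendsto_natCast_atTop_atTop).const_mul_atTop
      (by positivity)
  refine hsq.congr' ?_
  filter_upwards [eventually_ne_atTop 0] with j hj
  simp [sqSeqWithHead, hj, mul_pow]

lemma Equiv.Perm.tendsto_atTop_nat (σ : Equiv.Perm ℕ) : Tendsto σ atTop atTop := by
  simpa only [Nat.cofinite_eq_atTop] using σ.injective.tendsto_cofinite

lemma sq_ne_sq_pi_div_mul_natCast {d α₀ : ℝ} (hd : d ≠ 0)
    (hyp : ∀ n : ℤ, n ≠ 0 → α₀ * d / Real.pi ≠ (n : ℝ)) (k : ℕ) (hk : k ≠ 0) :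
    α₀ ^ 2 ≠ (Real.pi / d * k) ^ 2 := by
  have hα : ∀ s : ℝ, α₀ = s * (Real.pi / d * k) → α₀ * d / Real.pi = s * k := by
    rintro s rfl
    field_simp
  rw [Ne, sq_eq_sq_iff_eq_or_eq_neg]
  rintro (h | h)
  · exact hyp k (by exact_mod_cast hk) (by simpa using hα 1 (by simpa using h))
  · exact hyp (-k) (by simpa using hk) (by simpa using hα (-1) (by simpa using h))

/-- under the non-degeneracy hypothesis `α₀ d/π ∉ ℤ∖{0}`, the
transverse eigenvalues `μ_j²` (with `μ₀, μ₁` the two values `α₀, π/d` ordered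
by the threshold rule, and `μ_j = πj/d` for `j ≥ 2`) are pairwise distinct real
numbers and `μ_j → ∞`; in particular the spectrum `{μ_j²}` of the Robin
operator is real and discrete with all eigenvalues simple. -/
theorem stmt17 (d : ℝ) (hd : 0 < d) (α₀ : ℝ)
    (hyp : ∀ n : ℤ, n ≠ 0 → α₀ * d / Real.pi ≠ (n : ℝ)) :
    let μ : ℕ → ℝ := fun j =>
      if j = 0 then (if |α₀| ≤ Real.pi / d then α₀ else Real.pi / d)
      else if j = 1 then (if |α₀| ≤ Real.pi / d then Real.pi / d else α₀)
      else Real.pi * j / d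
    Function.Injective (fun j : ℕ => (μ j) ^ 2) ∧
    Tendsto (fun j : ℕ => (μ j) ^ 2) atTop atTop := by
  intro μ
  have hc : Real.pi / d ≠ 0 := (div_pos Real.pi_pos hd).ne'
  set σ : Equiv.Perm ℕ := if |α₀| ≤ Real.pi / d then 1 else Equiv.swap 0 1
  have hμ : (fun j => μ j ^ 2) = sqSeqWithHead α₀ (Real.pi / d) ∘ σ := by
    funext j
    rcases j with _ | _ | j <;>
      by_cases h : |α₀| ≤ Real.pi / d <;>
        simp [μ, σ, h, sqSeqWithHead, Equiv.swap_apply_of_ne_of_ne, mul_div_right_comm]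
  rw [hμ]
  exact ⟨(sqSeqWithHead_injective hc (sq_ne_sq_pi_div_mul_natCast hd.ne' hyp)).comp σ.injective,
    (tendsto_sqSeqWithHead hc).comp σ.tendsto_atTop_nat⟩
end
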